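/- arXiv:1501.03011 — 5 statements merged into one kernel-verified Lean document; each statement's English description precedes it below -/
import Mathlib

section
/- Let 𝓕 ∈ K[[x]][y] be an irreducible polynomial of degree d in y, let a be the x-adic valuation of its leading coefficient and b the x-adic valuation of its constant coefficient (as a polynomial in y). Then either a = 0 or b = 0, and every root φ of 𝓕 in the algebraic closure of K((x)) satisfies val_x(φ) = (b−a)/d, where val_x denotes the unique extension of the x-adic valuation to the algebraic closure of K((x)). -/
/-!
Put `|z| = 2 ^ (-v z)`. This is an absolute value on the algebraic closure extending the
`X`-adic norm of the complete field `K⸨X⸩`, hence it is the spectral norm, and for a root `φ` of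
the monic irreducible `P = 𝓕 / lc 𝓕` (irreducible over `K⸨X⸩` by Gauss's lemma) it equals
`|P(0)| ^ (1/d)`, i.e. `v φ = (b - a) / d`.
The spectral value `|P(0)| ^ (1/d)` also dominates `|P_i| ^ (1/(d-i))` for all `i < d`: the Newton
polygon of `P` is a single segment. Being irreducible of positive degree, `𝓕` is primitive, so
some coefficient `𝓕_i` has order `0`. For `i = d` this says `a = 0`; for `i < d` the segment
bound reads `(d - i) b + i a ≤ 0`, so `b = 0`.
-/

open Polynomial
open scoped PowerSeries LaurentSeries WithZero

section Spectral

variable {K : Type*} [NontriviallyNormedField K] [CompleteSpace K] [IsUltrametricDist K]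
  {P : K[X]}

theorem spectralNorm_eq_norm_coeff_zero_rpow_of_aeval_eq_zero {L : Type*} [Field L]
    [Algebra K L] [Algebra.IsAlgebraic K L] (hP : P.Monic) (hirr : Irreducible P) {x : L}
    (hx : aeval x P = 0) :
    spectralNorm K L x = ‖P.coeff 0‖ ^ (1 / P.natDegree : ℝ) := by
  rw [spectralNorm.spectralNorm_eq_norm_coeff_zero_rpow,
    ← minpoly.eq_of_irreducible_of_monic hirr hx hP]

theorem norm_coeff_rpow_le_norm_coeff_zero_rpow (hP : P.Monic) (hirr : Irreducible P) {i : ℕ}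
    (hi : i < P.natDegree) :
    ‖P.coeff i‖ ^ (1 / (P.natDegree - i : ℝ)) ≤ ‖P.coeff 0‖ ^ (1 / P.natDegree : ℝ) := by
  obtain ⟨x, hx⟩ := IsAlgClosed.exists_aeval_eq_zero (AlgebraicClosure K) P
    (degree_pos_of_irreducible hirr).ne'
  calc ‖P.coeff i‖ ^ (1 / (P.natDegree - i : ℝ)) = spectralValueTerms P i :=
        (spectralValueTerms_of_lt_natDegree P hi).symm
    _ ≤ spectralValue P := le_ciSup (spectralValueTerms_bddAbove P) i
    _ = spectralNorm K (AlgebraicClosure K) x := by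
        rw [spectralNorm, ← minpoly.eq_of_irreducible_of_monic hirr hx hP]
    _ = ‖P.coeff 0‖ ^ (1 / P.natDegree : ℝ) :=
        spectralNorm_eq_norm_coeff_zero_rpow_of_aeval_eq_zero hP hirr hx

theorem AbsoluteValue.eq_norm_coeff_zero_rpow_of_aeval_eq_zero {L : Type*} [Field L]
    [Algebra K L] [Algebra.IsAlgebraic K L] (hP : P.Monic) (hirr : Irreducible P)
    (f : AbsoluteValue L ℝ) (hf : ∀ c : K, f (algebraMap K L c) = ‖c‖) {x : L}
    (hx : aeval x P = 0) :
    f x = ‖P.coeff 0‖ ^ (1 / P.natDegree : ℝ) := by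
  rw [spectralNorm_unique_field_norm_ext hf,
    spectralNorm_eq_norm_coeff_zero_rpow_of_aeval_eq_zero hP hirr hx]

end Spectral

namespace AbsoluteValue

variable {Ω : Type*} [Field Ω] (v : Ω → ℚ)
  (hv_mul : ∀ a b : Ω, a ≠ 0 → b ≠ 0 → v (a * b) = v a + v b)
  (hv_add : ∀ a b : Ω, a ≠ 0 → b ≠ 0 → a + b ≠ 0 → min (v a) (v b) ≤ v (a + b))

open Classical in
noncomputable def ofAddVal : AbsoluteValue Ω ℝ where
  toFun z := if z = 0 then 0 else (2 : ℝ) ^ (-(v z : ℝ))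
  map_mul' x y := by
    rcases eq_or_ne x 0 with rfl | hx
    · simp
    rcases eq_or_ne y 0 with rfl | hy
    · simp
    simp only [if_neg hx, if_neg hy, if_neg (mul_ne_zero hx hy), hv_mul x y hx hy,
      ← Real.rpow_add two_pos]
    push_cast
    ring_nf
  nonneg' z := by split_ifs <;> positivity
  eq_zero' z := by
    split_ifs with hz <;> simp [hz, (Real.rpow_pos_of_pos two_pos _).ne']
  add_le' x y := by
    refine le_trans ?_ (max_le_add_of_nonneg (by split_ifs <;> positivity)
      (by split_ifs <;> positivity))
    rcases eq_or_ne x 0 with rfl | hx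
    · simp
    rcases eq_or_ne y 0 with rfl | hy
    · simp
    rcases eq_or_ne (x + y) 0 with hxy | hxy
    · simp only [if_pos hxy]
      positivity
    simp only [if_neg hx, if_neg hy, if_neg hxy]
    rcases min_le_iff.mp (hv_add x y hx hy hxy) with h | h
    · exact le_max_of_le_left
        (Real.rpow_le_rpow_of_exponent_le one_le_two (by simpa using h))
    · exact le_max_of_le_right
        (Real.rpow_le_rpow_of_exponent_le one_le_two (by simpa using h))

theorem ofAddVal_apply {z : Ω} (hz : z ≠ 0) :
    ofAddVal v hv_mul hv_add z = (2 : ℝ) ^ (-(v z : ℝ)) :=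
  if_neg hz

end AbsoluteValue

theorem Polynomial.IsPrimitive.exists_order_coeff_eq_zero {R : Type*} [CommRing R]
    [Nontrivial R] {p : R⟦X⟧[X]} (hp : p.IsPrimitive) : ∃ i, (p.coeff i).order = 0 := by
  by_contra! h
  have hX : C PowerSeries.X ∣ p := (C_dvd_iff_dvd_coeff _ _).mpr fun i =>
    PowerSeries.X_dvd_iff.mpr (PowerSeries.order_ne_zero_iff_constCoeff_eq_zero.mp (h i))
  simpa using PowerSeries.order_zero_of_unit (hp _ hX)

namespace LaurentSeries

variable {K : Type*} [Field K]

theorem orderTop_toPowerSeries_symm {z : K⟦X⟧} {n : ℕ} (hz : z.order = n) :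
    (HahnSeries.toPowerSeries.symm z).orderTop = n := by
  obtain ⟨hn, hlt⟩ := PowerSeries.order_eq_nat.mp hz
  refine HahnSeries.orderTop_eq_of_le (by simpa using hn) fun k hk => ?_
  by_contra! h
  exact hk (by simpa using hlt k h)

theorem order_coe_powerSeries {z : K⟦X⟧} {n : ℕ} (hz : z.order = n) :
    (z : K⸨X⸩).order = n := by
  have : (z : K⸨X⸩).orderTop = (n : ℤ) := by
    rw [HahnSeries.ofPowerSeries_apply, HahnSeries.orderTop_embDomain,
      orderTop_toPowerSeries_symm hz]
    rfl
  exact WithTop.coe_injective ((HahnSeries.order_eq_orderTop_of_ne_zero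
    (HahnSeries.orderTop_ne_top.mp (by simp [this]))).trans this)

theorem coe_ne_zero_of_order_eq {z : K⟦X⟧} {n : ℕ} (hz : z.order = n) : (z : K⸨X⸩) ≠ 0 := by
  rw [Ne, ← map_zero (HahnSeries.ofPowerSeries ℤ K), HahnSeries.ofPowerSeries_injective.eq_iff]
  rintro rfl
  simp at hz

theorem order_coe_div_coe {z w : K⟦X⟧} {n m : ℕ} (hz : z.order = n) (hw : w.order = m) :
    (z / w : K⸨X⸩).order = n - m := by
  have hz0 := coe_ne_zero_of_order_eq hz
  have hw0 := coe_ne_zero_of_order_eq hw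
  have hinv := HahnSeries.order_mul hw0 (inv_ne_zero hw0)
  rw [mul_inv_cancel₀ hw0, HahnSeries.order_one] at hinv
  rw [div_eq_mul_inv, HahnSeries.order_mul hz0 (inv_ne_zero hw0), order_coe_powerSeries hz]
  rw [order_coe_powerSeries hw] at hinv
  omega

theorem valuation_eq_exp_neg_order {c : K⸨X⸩} (hc : c ≠ 0) :
    Valued.v c = WithZero.exp (-c.order) := by
  have hv : Valued.v c ≠ 0 := (Valuation.ne_zero_iff _).mpr hc
  refine le_antisymm ((valuation_le_iff_coeff_lt_eq_zero K).mpr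
    fun n hn => HahnSeries.coeff_eq_zero_of_lt_order hn) ?_
  rw [← WithZero.exp_log hv, WithZero.exp_le_exp, neg_le]
  by_contra! h
  exact hc (HahnSeries.coeff_order_eq_zero.mp
    ((valuation_le_iff_coeff_lt_log_eq_zero K hv).mp le_rfl _ h))

-- Base `2`, so that the resulting norm matches `AbsoluteValue.ofAddVal`.
variable (K) in
noncomputable abbrev rankOneValuation : (Valued.v : Valuation K⸨X⸩ ℤᵐ⁰).RankOne where
  hom' := (WithZeroMulInt.toNNReal two_ne_zero).comp MonoidWithZeroHom.ValueGroup₀.embedding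
  strictMono' := (WithZeroMulInt.toNNReal_strictMono one_lt_two).comp
    MonoidWithZeroHom.ValueGroup₀.embedding_strictMono
  exists_val_nontrivial := by
    have h := valuation_X_pow K 1
    rw [pow_one] at h
    exact ⟨_, by rw [h]; simp⟩

section Norm

attribute [local instance] rankOneValuation Valued.toNontriviallyNormedField

theorem norm_eq_zpow_neg_order {c : K⸨X⸩} (hc : c ≠ 0) : ‖c‖ = (2 : ℝ) ^ (-c.order) := by
  have : ‖c‖ = WithZeroMulInt.toNNReal two_ne_zero (Valued.v c) := by
    rw [← Valuation.embedding_restrict]; rfl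
  rw [this, valuation_eq_exp_neg_order hc,
    WithZeroMulInt.toNNReal_neg_apply _ WithZero.exp_ne_zero,
    WithZero.toAdd_unzero_eq_log, WithZero.log_exp]
  simp

theorem norm_rpow_eq_two_rpow {c : K⸨X⸩} (hc : c ≠ 0) (r : ℝ) :
    ‖c‖ ^ r = (2 : ℝ) ^ (-c.order * r) := by
  rw [norm_eq_zpow_neg_order hc, ← Real.rpow_intCast, ← Real.rpow_mul two_pos.le]
  push_cast
  rfl

theorem order_coeff_zero_div_natDegree_le {P : K⸨X⸩[X]} (hP : P.Monic) (hirr : Irreducible P)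
    (h0 : P.coeff 0 ≠ 0) {i : ℕ} (hi : i < P.natDegree) (hi0 : P.coeff i ≠ 0) :
    ((P.coeff 0).order : ℚ) / P.natDegree ≤ (P.coeff i).order / (P.natDegree - i : ℚ) := by
  have h := norm_coeff_rpow_le_norm_coeff_zero_rpow hP hirr hi
  rw [norm_rpow_eq_two_rpow hi0, norm_rpow_eq_two_rpow h0,
    Real.rpow_le_rpow_left_iff one_lt_two] at h
  have : ((P.coeff 0).order : ℝ) / P.natDegree ≤ (P.coeff i).order / (P.natDegree - i : ℝ) := by
    simpa [div_eq_mul_inv] using h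
  exact_mod_cast this

theorem val_eq_order_coeff_zero_div_natDegree (v : AlgebraicClosure K⸨X⸩ → ℚ)
    (hv_ext : ∀ a : K⸨X⸩, a ≠ 0 → v (algebraMap K⸨X⸩ (AlgebraicClosure K⸨X⸩) a) = a.order)
    (hv_mul : ∀ a b : AlgebraicClosure K⸨X⸩, a ≠ 0 → b ≠ 0 → v (a * b) = v a + v b)
    (hv_add : ∀ a b : AlgebraicClosure K⸨X⸩,
      a ≠ 0 → b ≠ 0 → a + b ≠ 0 → min (v a) (v b) ≤ v (a + b))
    {P : K⸨X⸩[X]} (hP : P.Monic) (hirr : Irreducible P) (h0 : P.coeff 0 ≠ 0)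
    {φ : AlgebraicClosure K⸨X⸩} (hφ : aeval φ P = 0) :
    v φ = (P.coeff 0).order / P.natDegree := by
  set f := AbsoluteValue.ofAddVal v hv_mul hv_add
  have hf (c : K⸨X⸩) : f (algebraMap K⸨X⸩ (AlgebraicClosure K⸨X⸩) c) = ‖c‖ := by
    rcases eq_or_ne c 0 with rfl | hc
    · simp
    rw [AbsoluteValue.ofAddVal_apply _ _ _ ((_root_.map_ne_zero _).mpr hc), hv_ext c hc,
      norm_eq_zpow_neg_order hc, ← Real.rpow_intCast]
    push_cast
    rfl
  have hφ0 : φ ≠ 0 := by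
    rintro rfl
    rw [← coeff_zero_eq_aeval_zero', _root_.map_eq_zero] at hφ
    exact h0 hφ
  have h := f.eq_norm_coeff_zero_rpow_of_aeval_eq_zero hP hirr hf hφ
  rw [AbsoluteValue.ofAddVal_apply _ _ _ hφ0, norm_rpow_eq_two_rpow h0,
    Real.rpow_right_inj two_pos one_lt_two.ne'] at h
  have : (v φ : ℝ) = (P.coeff 0).order / P.natDegree := by
    rw [div_eq_mul_one_div]
    linarith
  exact_mod_cast this

end Norm

end LaurentSeries

/-- Let `𝓕 ∈ K[[x]][y]` be irreducible of degree `d ≥ 1` in `y`, let `a` be the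
`x`-adic valuation of its leading coefficient and `b` that of its constant coefficient. Then
`a = 0` or `b = 0`, and every root `φ` of `𝓕` in the algebraic closure `Ω` of `K((x))` satisfies
`v(φ) = (b − a)/d`, where `v` is the unique extension of the `x`-adic valuation of `K((x))`
to `Ω` (characterized by extending the valuation and being additive on products). -/
theorem stmt1 {K : Type*} [Field K]
    (v : AlgebraicClosure (LaurentSeries K) → ℚ)
    (hv_ext : ∀ a : LaurentSeries K, a ≠ 0 →
      v (algebraMap (LaurentSeries K) (AlgebraicClosure (LaurentSeries K)) a) = (a.order : ℚ))
    (hv_mul : ∀ a b : AlgebraicClosure (LaurentSeries K),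
      a ≠ 0 → b ≠ 0 → v (a * b) = v a + v b)
    (hv_add : ∀ a b : AlgebraicClosure (LaurentSeries K),
      a ≠ 0 → b ≠ 0 → a + b ≠ 0 → min (v a) (v b) ≤ v (a + b))
    (𝓕 : Polynomial (PowerSeries K)) (d : ℕ) (hd : 𝓕.natDegree = d) (hd1 : 1 ≤ d)
    (hirr : Irreducible 𝓕)
    (a b : ℕ)
    (ha : PowerSeries.order 𝓕.leadingCoeff = (a : ℕ∞))
    (hb : PowerSeries.order (𝓕.coeff 0) = (b : ℕ∞)) :
    (a = 0 ∨ b = 0) ∧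
      ∀ φ : AlgebraicClosure (LaurentSeries K),
        Polynomial.aeval φ (𝓕.map (algebraMap (PowerSeries K) (LaurentSeries K))) = 0 →
          v φ = ((b : ℚ) - (a : ℚ)) / (d : ℚ) := by
  have hprim : 𝓕.IsPrimitive := hirr.isPrimitive (by omega)
  have hinj : Function.Injective (algebraMap K⟦X⟧ K⸨X⸩) := IsFractionRing.injective _ _
  set G := 𝓕.map (algebraMap K⟦X⟧ K⸨X⸩)
  have hGirr : Irreducible G := hprim.irreducible_iff_irreducible_map_fraction_map.mp hirr
  have hlc : G.leadingCoeff = algebraMap K⟦X⟧ K⸨X⸩ 𝓕.leadingCoeff :=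
    leadingCoeff_map_of_injective hinj _
  have hlc0 : G.leadingCoeff⁻¹ ≠ 0 := inv_ne_zero (leadingCoeff_ne_zero.mpr hGirr.ne_zero)
  set P := G * C G.leadingCoeff⁻¹ with hP
  have hPm : P.Monic := monic_mul_leadingCoeff_inv hGirr.ne_zero
  have hPirr : Irreducible P :=
    (associated_mul_unit_right G _ (isUnit_C.mpr hlc0.isUnit)).irreducible hGirr
  have hPdeg : P.natDegree = d := by
    rw [natDegree_mul_C hlc0, natDegree_map_eq_of_injective hinj, hd]
  have hPcoeff {i n : ℕ} (hn : (𝓕.coeff i).order = n) :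
      P.coeff i ≠ 0 ∧ (P.coeff i).order = n - a := by
    rw [coeff_mul_C, coeff_map, hlc, ← div_eq_mul_inv]
    exact ⟨div_ne_zero (LaurentSeries.coe_ne_zero_of_order_eq hn)
      (LaurentSeries.coe_ne_zero_of_order_eq ha), LaurentSeries.order_coe_div_coe hn ha⟩
  obtain ⟨hP0, hP0ord⟩ := hPcoeff hb
  refine ⟨?_, fun φ hφ => ?_⟩
  · obtain ⟨i, hi⟩ := hprim.exists_order_coeff_eq_zero
    have hid : i ≤ d := hd ▸ le_natDegree_of_ne_zero fun h => by simp [h] at hi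
    rcases hid.lt_or_eq with hlt | rfl
    · obtain ⟨hPi, hPiord⟩ := hPcoeff (n := 0) hi
      have h := LaurentSeries.order_coeff_zero_div_natDegree_le hPm hPirr hP0 (hPdeg ▸ hlt) hPi
      rw [hP0ord, hPiord, hPdeg, div_le_div_iff₀ (by positivity) (by simpa using hlt)] at h
      push_cast at h
      right
      have : (b : ℚ) ≤ 0 := by nlinarith [(by exact_mod_cast hlt : (i : ℚ) < d)]
      exact_mod_cast this.antisymm b.cast_nonneg
    · left
      rw [leadingCoeff, hd, hi] at ha
      exact_mod_cast ha.symm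
  · have hφP : aeval φ P = 0 := by rw [hP, map_mul, hφ, zero_mul]
    rw [LaurentSeries.val_eq_order_coeff_zero_div_natDegree v hv_ext hv_mul hv_add hPm hPirr hP0
      hφP, hP0ord, hPdeg]
    push_cast
    rfl
end

section
/- Let L be a field with K ⊆ L ⊆ (algebraic closure of K((x))), let F ∈ K[x,y] be separable in y of y-degree d_y with roots y₁,…,y_{d_y} in the algebraic closure of K(x), and let G ∈ K[x,y] with deg_y G < d_y. Then the residues ρ_k := G(x,y_k)/∂_yF(x,y_k) all lie in L if and only if G is an L-linear combination of the polynomials (F/E_j)·∂_y E_j, where E₁,…,E_ℓ are the irreducible factors of F over L. -/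
/-!
Write `F = c₀ ∏ E_j`. At a root `φ` of `E_j` every term `(F/E_i) E_i'` with `i ≠ j` vanishes, so
`F'(φ) = (F/E_j) E_j'(φ)`, and `F'(φ) ≠ 0` by separability. Hence if `G = ∑ c_i (F/E_i) E_i'`, the
residue at `φ` is `c_j`. Conversely, if the residue `c_j` at one root of `E_j` lies in `L`, then
`G - c_j F'` vanishes there, so the irreducible `E_j` divides it and `G(φ) = c_j F'(φ)` at every
root of `E_j`. Then `G - ∑ c_j (F/E_j) E_j'` vanishes at all `d_y` distinct roots of `F` and has
degree `< d_y`, so it is zero.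
-/

open Polynomial Finset

namespace Polynomial

section ProductRule

variable {k ι : Type*} [Field k] [Fintype ι]
variable {Ω : Type*} [Field Ω] [Algebra k Ω] {c₀ : k} {E : ι → k[X]} {φ : Ω} {j : ι}

theorem exists_aeval_eq_zero_of_aeval_C_mul_prod_eq_zero (hc₀ : c₀ ≠ 0)
    (hφ : aeval φ (C c₀ * ∏ i, E i) = 0) : ∃ j, aeval φ (E j) = 0 := by
  simpa [map_prod, prod_eq_zero_iff, hc₀] using hφ

variable [DecidableEq ι]

/-- The paper's `(F/E_j)·∂_y E_j` for `F = c₀ ∏ E_i`. -/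
noncomputable def productRuleTerm (c₀ : k) (E : ι → k[X]) (j : ι) : k[X] :=
  (C c₀ * ∏ i ∈ univ.erase j, E i) * derivative (E j)

theorem derivative_C_mul_prod (c₀ : k) (E : ι → k[X]) :
    derivative (C c₀ * ∏ i, E i) = ∑ j, productRuleTerm c₀ E j := by
  rw [derivative_C_mul, derivative_prod_finset, mul_sum]
  exact sum_congr rfl fun j _ => (mul_assoc _ _ _).symm

theorem natDegree_productRuleTerm_lt (hc₀ : c₀ ≠ 0)
    (hE : ∀ i, 0 < (E i).natDegree) (j : ι) :
    (productRuleTerm c₀ E j).natDegree < (C c₀ * ∏ i, E i).natDegree := by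
  have hE0 : ∀ i, E i ≠ 0 := fun i h => by simpa [h] using hE i
  calc (productRuleTerm c₀ E j).natDegree
      ≤ (C c₀ * ∏ i ∈ univ.erase j, E i).natDegree + (derivative (E j)).natDegree :=
        natDegree_mul_le
    _ ≤ ∑ i ∈ univ.erase j, (E i).natDegree + (derivative (E j)).natDegree := by
        gcongr
        exact natDegree_C_mul_le _ _ |>.trans (natDegree_prod_le _ _)
    _ < ∑ i ∈ univ.erase j, (E i).natDegree + (E j).natDegree := by
        gcongr
        exact natDegree_derivative_lt (hE j).ne'
    _ = (C c₀ * ∏ i, E i).natDegree := by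
        rw [sum_erase_add _ _ (mem_univ j), natDegree_C_mul hc₀,
          natDegree_prod _ _ fun i _ => hE0 i]

theorem aeval_productRuleTerm_of_ne (hj : aeval φ (E j) = 0) {i : ι} (hij : i ≠ j) :
    aeval φ (productRuleTerm c₀ E i) = 0 := by
  have hprod : aeval φ (∏ m ∈ univ.erase i, E m) = 0 := by
    rw [map_prod]
    exact prod_eq_zero (mem_erase.mpr ⟨hij.symm, mem_univ j⟩) hj
  simp [productRuleTerm, hprod]

/-- At a root of `E j` only the `j`-th term of the product rule survives. -/
theorem aeval_sum_C_mul_productRuleTerm (hj : aeval φ (E j) = 0) (a : ι → k) :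
    aeval φ (∑ i, C (a i) * productRuleTerm c₀ E i) =
      algebraMap k Ω (a j) * aeval φ (derivative (C c₀ * ∏ i, E i)) := by
  rw [derivative_C_mul_prod, map_sum, map_sum, mul_sum]
  refine sum_congr rfl fun i _ => ?_
  obtain rfl | hij := eq_or_ne i j
  · rw [map_mul, aeval_C]
  · rw [map_mul, aeval_productRuleTerm_of_ne hj hij, mul_zero, mul_zero]

end ProductRule

section Residues

variable {k L Ω ι : Type*} [Field k] [Field L] [Algebra L k] [Field Ω] [Algebra k Ω]

theorem eq_zero_of_natDegree_lt_of_forall_aeval_eq_zero [IsAlgClosed Ω] {f p : k[X]}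
    (hf : f.Separable) (hp : p.natDegree < f.natDegree)
    (h : ∀ φ : Ω, aeval φ f = 0 → aeval φ p = 0) : p = 0 := by
  classical
  refine (Polynomial.map_eq_zero_iff (algebraMap k Ω).injective).mp
    (eq_zero_of_natDegree_lt_card_of_eval_eq_zero _ (f := ((↑) : f.rootSet Ω → Ω))
      Subtype.val_injective ?_ ?_)
  · rintro ⟨φ, hφ⟩
    rw [eval_map_algebraMap]
    exact h φ (aeval_eq_zero_of_mem_rootSet hφ)
  · rwa [natDegree_map, card_rootSet_eq_natDegree hf (IsAlgClosed.splits _)]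

theorem exists_dvd_sub_C_mul_derivative [IsAlgClosed Ω] {f g p : k[X]} (hp : Irreducible p)
    (hpf : p ∣ f) (hf : f.Separable)
    (h : ∀ φ : Ω, aeval φ f = 0 → aeval φ g / aeval φ (derivative f) ∈
      Set.range fun c : L => algebraMap k Ω (algebraMap L k c)) :
    ∃ a : L, p ∣ g - C (algebraMap L k a) * derivative f := by
  obtain ⟨φ, hφ⟩ := IsAlgClosed.exists_aeval_eq_zero Ω p (degree_pos_of_irreducible hp).ne'
  have hφf : aeval φ f = 0 := aeval_eq_zero_of_dvd_aeval_eq_zero hpf hφ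
  obtain ⟨a, ha : algebraMap k Ω (algebraMap L k a) = _⟩ := h φ hφf
  refine ⟨a, (hp.dvd_iff_aeval_eq_zero hφ).mp ?_⟩
  rw [map_sub, map_mul, aeval_C, ha, div_mul_cancel₀ _ (hf.aeval_derivative_ne_zero hφf), sub_self]

variable [Fintype ι] [DecidableEq ι] {c₀ : k} {E : ι → k[X]}

theorem residue_mem_range_of_eq_sum (hsep : (C c₀ * ∏ i, E i).Separable) (a : ι → L) {φ : Ω}
    (hφ : aeval φ (C c₀ * ∏ i, E i) = 0) :
    aeval φ (∑ j, C (algebraMap L k (a j)) * productRuleTerm c₀ E j) /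
        aeval φ (derivative (C c₀ * ∏ i, E i)) ∈
      Set.range fun c : L => algebraMap k Ω (algebraMap L k c) := by
  have hc₀ : c₀ ≠ 0 := fun h => hsep.ne_zero (by simp [h])
  obtain ⟨j, hj⟩ := exists_aeval_eq_zero_of_aeval_C_mul_prod_eq_zero hc₀ hφ
  exact ⟨a j, by
    rw [aeval_sum_C_mul_productRuleTerm hj,
      mul_div_cancel_right₀ _ (hsep.aeval_derivative_ne_zero hφ)]⟩

theorem exists_eq_sum_of_forall_residue_mem_range [IsAlgClosed Ω] {g : k[X]}
    (hsep : (C c₀ * ∏ i, E i).Separable) (hg : g.natDegree < (C c₀ * ∏ i, E i).natDegree)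
    (hE : ∀ i, Irreducible (E i))
    (h : ∀ φ : Ω, aeval φ (C c₀ * ∏ i, E i) = 0 →
      aeval φ g / aeval φ (derivative (C c₀ * ∏ i, E i)) ∈
        Set.range fun c : L => algebraMap k Ω (algebraMap L k c)) :
    ∃ a : ι → L, g = ∑ j, C (algebraMap L k (a j)) * productRuleTerm c₀ E j := by
  have hc₀ : c₀ ≠ 0 := fun h => hsep.ne_zero (by simp [h])
  have hEdeg : ∀ i, 0 < (E i).natDegree := fun i => (hE i).natDegree_pos
  have hEf : ∀ j, E j ∣ C c₀ * ∏ i, E i := fun j => (dvd_prod_of_mem E (mem_univ j)).mul_left _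
  choose a ha using fun j => exists_dvd_sub_C_mul_derivative (hE j) (hEf j) hsep h
  refine ⟨a, sub_eq_zero.mp (eq_zero_of_natDegree_lt_of_forall_aeval_eq_zero (Ω := Ω) hsep ?_ ?_)⟩
  · have hsum : (∑ j, C (algebraMap L k (a j)) * productRuleTerm c₀ E j).natDegree ≤
        (C c₀ * ∏ i, E i).natDegree - 1 :=
      natDegree_sum_le_of_forall_le _ _ fun j _ => (natDegree_C_mul_le _ _).trans
        (Nat.le_sub_one_of_lt (natDegree_productRuleTerm_lt hc₀ hEdeg j))
    have := natDegree_sub_le g (∑ j, C (algebraMap L k (a j)) * productRuleTerm c₀ E j)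
    omega
  · intro φ hφ
    obtain ⟨j, hj⟩ := exists_aeval_eq_zero_of_aeval_C_mul_prod_eq_zero hc₀ hφ
    have hgφ := ((hE j).dvd_iff_aeval_eq_zero hj).mpr (ha j)
    rw [map_sub, map_mul, aeval_C] at hgφ
    rwa [map_sub, aeval_sum_C_mul_productRuleTerm hj]

end Residues

end Polynomial

theorem stmt5_general {K L : Type*} [Field K] [Field L] [Algebra K L]
    (F G : Polynomial (Polynomial K)) (dy : ℕ) (hdy : F.natDegree = dy)
    (hdegG : G.natDegree < dy)
    (hsep : (F.map ((algebraMap (Polynomial L) (RatFunc L)).comp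
        (Polynomial.mapRingHom (algebraMap K L)))).Separable)
    (ℓ : ℕ) (c₀ : RatFunc L) (E : Fin ℓ → Polynomial (RatFunc L))
    (hE : F.map ((algebraMap (Polynomial L) (RatFunc L)).comp
        (Polynomial.mapRingHom (algebraMap K L))) = Polynomial.C c₀ * ∏ j, E j)
    (hEirr : ∀ j, Irreducible (E j)) :
    (∀ φ : AlgebraicClosure (RatFunc L),
        Polynomial.eval φ (F.map ((algebraMap (RatFunc L) (AlgebraicClosure (RatFunc L))).comp
            ((algebraMap (Polynomial L) (RatFunc L)).comp
              (Polynomial.mapRingHom (algebraMap K L))))) = 0 →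
        Polynomial.eval φ (G.map ((algebraMap (RatFunc L) (AlgebraicClosure (RatFunc L))).comp
            ((algebraMap (Polynomial L) (RatFunc L)).comp
              (Polynomial.mapRingHom (algebraMap K L))))) /
          Polynomial.eval φ (derivative (F.map
            ((algebraMap (RatFunc L) (AlgebraicClosure (RatFunc L))).comp
              ((algebraMap (Polynomial L) (RatFunc L)).comp
                (Polynomial.mapRingHom (algebraMap K L)))))) ∈
          Set.range (fun c : L =>
            algebraMap (RatFunc L) (AlgebraicClosure (RatFunc L))
              (algebraMap L (RatFunc L) c)))
      ↔
    (∃ c : Fin ℓ → L,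
        G.map ((algebraMap (Polynomial L) (RatFunc L)).comp
            (Polynomial.mapRingHom (algebraMap K L))) =
          ∑ j, Polynomial.C (algebraMap L (RatFunc L) (c j)) *
            ((Polynomial.C c₀ * ∏ k ∈ Finset.univ.erase j, E k) * derivative (E j))) := by
  set ψ : Polynomial K →+* RatFunc L :=
    (algebraMap (Polynomial L) (RatFunc L)).comp (Polynomial.mapRingHom (algebraMap K L))
  have hψ : Function.Injective ψ :=
    (IsFractionRing.injective (Polynomial L) (RatFunc L)).comp
      (map_injective _ (algebraMap K L).injective)
  have hdegG' : (G.map ψ).natDegree < (C c₀ * ∏ j, E j).natDegree :=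
    calc (G.map ψ).natDegree ≤ G.natDegree := natDegree_map_le
      _ < (F.map ψ).natDegree := by rwa [natDegree_map_eq_of_injective hψ, hdy]
      _ = _ := by rw [hE]
  rw [hE] at hsep
  simp only [← Polynomial.map_map, derivative_map, eval_map_algebraMap, hE]
  exact ⟨exists_eq_sum_of_forall_residue_mem_range hsep hdegG' hEirr,
    fun ⟨c, hc⟩ φ hφ => hc ▸ residue_mem_range_of_eq_sum hsep c hφ⟩

/-- **key residue lemma.** Let `K ⊆ L` be fields, `F ∈ K[x,y]` separable in `y` of
`y`-degree `d_y` and `G ∈ K[x,y]` with `deg_y G < d_y`.  Let `E₁,…,E_ℓ` be the monic irreducible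
factors of `F` over `L(x)` (so `F = c₀·E₁⋯E_ℓ`).  Then the residues
`ρ_φ = G(x,φ)/∂_yF(x,φ)` at all roots `φ` of `F` (in an algebraic closure `Ω` of `L(x)`) all
lie in `L` if and only if `G` is an `L`-linear combination of the `(F/E_j)·∂_y E_j`. -/
theorem stmt5 {K L : Type*} [Field K] [Field L] [Algebra K L]
    (F G : Polynomial (Polynomial K)) (dy : ℕ) (hdy : F.natDegree = dy)
    (hdegG : G.natDegree < dy)
    (hsep : (F.map ((algebraMap (Polynomial L) (RatFunc L)).comp
        (Polynomial.mapRingHom (algebraMap K L)))).Separable)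
    (ℓ : ℕ) (c₀ : RatFunc L) (E : Fin ℓ → Polynomial (RatFunc L))
    (hE : F.map ((algebraMap (Polynomial L) (RatFunc L)).comp
        (Polynomial.mapRingHom (algebraMap K L))) = Polynomial.C c₀ * ∏ j, E j)
    (hEirr : ∀ j, Irreducible (E j)) (hEmonic : ∀ j, (E j).Monic) :
    (∀ φ : AlgebraicClosure (RatFunc L),
        Polynomial.eval φ (F.map ((algebraMap (RatFunc L) (AlgebraicClosure (RatFunc L))).comp
            ((algebraMap (Polynomial L) (RatFunc L)).comp
              (Polynomial.mapRingHom (algebraMap K L))))) = 0 →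
        Polynomial.eval φ (G.map ((algebraMap (RatFunc L) (AlgebraicClosure (RatFunc L))).comp
            ((algebraMap (Polynomial L) (RatFunc L)).comp
              (Polynomial.mapRingHom (algebraMap K L))))) /
          Polynomial.eval φ (derivative (F.map
            ((algebraMap (RatFunc L) (AlgebraicClosure (RatFunc L))).comp
              ((algebraMap (Polynomial L) (RatFunc L)).comp
                (Polynomial.mapRingHom (algebraMap K L)))))) ∈
          Set.range (fun c : L =>
            algebraMap (RatFunc L) (AlgebraicClosure (RatFunc L))
              (algebraMap L (RatFunc L) c)))
      ↔
    (∃ c : Fin ℓ → L,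
        G.map ((algebraMap (Polynomial L) (RatFunc L)).comp
            (Polynomial.mapRingHom (algebraMap K L))) =
          ∑ j, Polynomial.C (algebraMap L (RatFunc L) (c j)) *
            ((Polynomial.C c₀ * ∏ k ∈ Finset.univ.erase j, E k) * derivative (E j))) :=
  stmt5_general F G dy hdy hdegG hsep ℓ c₀ E hE hEirr
end

section
/- Let R be a commutative ring, f₁,…,f_s ∈ R[y] with invertible leading coefficients, f = f₁⋯f_s, and suppose the logarithmic derivative identity Σ_i μ_i (f/f_i)·f_i' = f·(Π f_i^{μ_i})'/(Π f_i^{μ_i}) in the total ring of fractions, for μ ∈ ℤ^s. If R contains a field of characteristic zero, then Σ_i μ_i (f/f_i)·f_i' = 0 implies Π_i f_i^{μ_i} is a unit of R (i.e. lies in R and is constant in y). -/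
/-!
Write `μ = a - b` with `a, b ≥ 0` and put `P = ∏ f_i ^ a_i`, `Q = ∏ f_i ^ b_i`, `F = ∏ f_i`.
Multiplying logarithmic derivatives by `F` gives `W(P, Q) · F = -(Σ_i μ_i (F / f_i) f_i') · P · Q`
for the Wronskian `W(P, Q) = P Q' - P' Q`; since `F` has a unit leading coefficient it is a
non-zero-divisor, so the hypothesis makes `W(P, Q)` vanish. In degree `deg P + deg Q - 1` the
coefficient of `W(P, Q)` is `(deg Q - deg P) · lc P · lc Q`, so `deg P = deg Q` in characteristic
zero. Applied to `lc Q · P - lc P · Q`, whose Wronskian with `Q` also vanishes but whose degree is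
smaller than `deg Q`, the same comparison shows that it is zero, i.e. `P = (lc P / lc Q) · Q`.
-/

open Polynomial

namespace Polynomial

variable {R : Type*} [CommRing R]

section LeadingCoeff

variable {ι : Type*} {p q : R[X]}

lemma isUnit_leadingCoeff_mul (hp : IsUnit p.leadingCoeff) (hq : IsUnit q.leadingCoeff) :
    IsUnit (p * q).leadingCoeff := by
  nontriviality R
  rw [leadingCoeff_mul' (hp.mul hq).ne_zero]
  exact hp.mul hq

lemma isUnit_leadingCoeff_pow (hp : IsUnit p.leadingCoeff) (n : ℕ) :
    IsUnit (p ^ n).leadingCoeff := by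
  induction n with
  | zero => simp
  | succ n ih => rw [pow_succ]; exact isUnit_leadingCoeff_mul ih hp

lemma isUnit_leadingCoeff_prod (s : Finset ι) {f : ι → R[X]}
    (hf : ∀ i ∈ s, IsUnit (f i).leadingCoeff) : IsUnit (∏ i ∈ s, f i).leadingCoeff :=
  Finset.prod_induction f (fun p => IsUnit p.leadingCoeff) (fun _ _ => isUnit_leadingCoeff_mul)
    (by simp) hf

end LeadingCoeff

lemma coeff_derivative_mul_natDegree_add_sub_one (p q : R[X]) :
    (derivative p * q).coeff (p.natDegree + q.natDegree - 1) =
      p.natDegree * (p.leadingCoeff * q.leadingCoeff) := by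
  rcases Nat.eq_zero_or_pos p.natDegree with hp | hp
  · simp [derivative_of_natDegree_zero hp, hp]
  rw [show p.natDegree + q.natDegree - 1 = (p.natDegree - 1) + q.natDegree by omega,
    coeff_mul_add_eq_of_natDegree_le (natDegree_derivative_le p) le_rfl, coeff_derivative,
    Nat.sub_add_cancel hp, Nat.cast_sub hp]
  simp only [leadingCoeff, Nat.cast_one, sub_add_cancel]
  ring

lemma natDegree_eq_of_wronskian_eq_zero [IsAddTorsionFree R] {p q : R[X]}
    (hq : IsUnit q.leadingCoeff) (hp : p ≠ 0) (hW : wronskian p q = 0) :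
    p.natDegree = q.natDegree := by
  have hx : p.leadingCoeff * q.leadingCoeff ≠ 0 :=
    fun h => hp (leadingCoeff_eq_zero.mp (hq.mul_left_eq_zero.mp h))
  have hcoeff := congrArg (coeff · (p.natDegree + q.natDegree - 1)) hW
  simp only [wronskian, coeff_sub, coeff_zero] at hcoeff
  rw [mul_comm p, add_comm p.natDegree, coeff_derivative_mul_natDegree_add_sub_one, add_comm,
    coeff_derivative_mul_natDegree_add_sub_one, mul_comm q.leadingCoeff, ← sub_mul] at hcoeff
  have : ((q.natDegree : ℤ) - p.natDegree) • (p.leadingCoeff * q.leadingCoeff) = 0 := by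
    rw [sub_smul, natCast_zsmul, natCast_zsmul, nsmul_eq_mul, nsmul_eq_mul, ← sub_mul]
    exact hcoeff
  rw [IsAddTorsionFree.zsmul_eq_zero_iff_left hx, sub_eq_zero] at this
  exact_mod_cast this.symm

lemma eq_C_mul_of_wronskian_eq_zero [IsAddTorsionFree R] {g h : R[X]}
    (hg : IsUnit g.leadingCoeff) (hh : IsUnit h.leadingCoeff) (hW : wronskian g h = 0) :
    ∃ c : R, IsUnit c ∧ g = C c * h := by
  set A := g.leadingCoeff
  set B := h.leadingCoeff
  set p := C B * g - C A * h
  have hg_top : g.coeff h.natDegree = A := by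
    rcases eq_or_ne g 0 with rfl | hg0
    · simp [A]
    · rw [← natDegree_eq_of_wronskian_eq_zero hh hg0 hW]; rfl
  have hpW : wronskian p h = 0 := by
    simp only [p, wronskian, derivative_sub, derivative_C_mul] at hW ⊢
    linear_combination C B * hW
  have hp : p = 0 := by
    by_contra hp
    refine hp (leadingCoeff_eq_zero.mp ?_)
    rw [leadingCoeff, natDegree_eq_of_wronskian_eq_zero hh hp hpW]
    simp only [p, coeff_sub, coeff_C_mul, hg_top, coeff_natDegree]
    ring
  refine ⟨↑hh.unit⁻¹ * A, hh.unit⁻¹.isUnit.mul hg, ?_⟩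
  rw [C_mul, mul_assoc, ← sub_eq_zero.mp hp, ← mul_assoc, ← C_mul, hh.val_inv_mul, C_1, one_mul]

section LogDeriv

variable {ι : Type*} [Fintype ι] [DecidableEq ι]

/-- `F · (∏ f_i ^ μ_i)' / ∏ f_i ^ μ_i` for `F = ∏ f_i`, written without division as
`Σ_i μ_i (F / f_i) f_i'`. -/
noncomputable def logDerivNumerator (f : ι → R[X]) (μ : ι → ℤ) : R[X] :=
  ∑ i, C (μ i : R) * ((∏ k ∈ Finset.univ.erase i, f k) * derivative (f i))

lemma logDerivNumerator_sub (f : ι → R[X]) (μ ν : ι → ℤ) :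
    logDerivNumerator f (μ - ν) = logDerivNumerator f μ - logDerivNumerator f ν := by
  simp only [logDerivNumerator, Pi.sub_apply, Int.cast_sub, C_sub, sub_mul,
    Finset.sum_sub_distrib]

lemma derivative_prod_pow_mul_prod (f : ι → R[X]) (n : ι → ℕ) :
    derivative (∏ i, f i ^ n i) * ∏ i, f i =
      logDerivNumerator f (fun i => n i) * ∏ i, f i ^ n i := by
  rw [derivative_prod_finset, logDerivNumerator, Finset.sum_mul, Finset.sum_mul]
  refine Finset.sum_congr rfl fun i hi => ?_
  rw [← Finset.mul_prod_erase _ _ hi, ← Finset.mul_prod_erase _ (fun i => f i ^ n i) hi,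
    derivative_pow, Int.cast_natCast]
  rcases Nat.eq_zero_or_pos (n i) with hn | hn
  · simp [hn]
  · rw [← Nat.sub_add_cancel hn, pow_succ, Nat.add_sub_cancel]
    ring

lemma wronskian_prod_pow_mul_prod (f : ι → R[X]) (m n : ι → ℕ) :
    wronskian (∏ i, f i ^ m i) (∏ i, f i ^ n i) * ∏ i, f i =
      logDerivNumerator f (fun i => (n i : ℤ) - m i) * (∏ i, f i ^ m i) * ∏ i, f i ^ n i := by
  rw [show (fun i => (n i : ℤ) - m i) = (fun i => (n i : ℤ)) - (fun i => (m i : ℤ)) from rfl,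
    logDerivNumerator_sub, wronskian]
  linear_combination (∏ i, f i ^ m i) * derivative_prod_pow_mul_prod f n -
    (∏ i, f i ^ n i) * derivative_prod_pow_mul_prod f m

end LogDeriv

end Polynomial

/-- Let `R` be a commutative ring containing a field `K` of characteristic
zero, and `f₁,…,f_s ∈ R[y]` with invertible leading coefficients, `f = f₁⋯f_s`.  If the
logarithmic-derivative combination `Σ_i μ_i (f/f_i)·f_i'` vanishes for some `μ ∈ ℤ^s`, then
`Π_i f_i^{μ_i}` is a unit of `R`, i.e. (clearing the negative exponents)
`Π_{μ_i ≥ 0} f_i^{μ_i} = c · Π_{μ_i < 0} f_i^{−μ_i}` for some unit `c` of `R`. -/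
theorem stmt9 {K R : Type*} [Field K] [CharZero K] [CommRing R] [Algebra K R]
    (s : ℕ) (f : Fin s → Polynomial R)
    (hlc : ∀ i, IsUnit (f i).leadingCoeff)
    (μ : Fin s → ℤ)
    (h : ∑ i, Polynomial.C ((μ i : ℤ) : R) *
        ((∏ k ∈ Finset.univ.erase i, f k) * derivative (f i)) = 0) :
    ∃ c : R, IsUnit c ∧
      ∏ i, (f i) ^ (μ i).toNat = Polynomial.C c * ∏ i, (f i) ^ (-(μ i)).toNat := by
  have : IsAddTorsionFree R := .of_isTorsionFree K R
  have hprod : ∀ n : Fin s → ℕ, IsUnit (∏ i, f i ^ n i).leadingCoeff := fun n =>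
    isUnit_leadingCoeff_prod _ fun i _ => isUnit_leadingCoeff_pow (hlc i) (n i)
  refine eq_C_mul_of_wronskian_eq_zero (hprod _) (hprod _) ?_
  have hμ : (fun i => ((-μ i).toNat : ℤ) - (μ i).toNat) = -μ := by
    funext i
    simp only [Pi.neg_apply]
    omega
  have hL : logDerivNumerator f (-μ) = 0 := by
    simp only [logDerivNumerator, Pi.neg_apply, Int.cast_neg, C_neg, neg_mul,
      Finset.sum_neg_distrib, h, neg_zero]
  have hW := wronskian_prod_pow_mul_prod f (fun i => (μ i).toNat) (fun i => (-μ i).toNat)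
  rw [hμ, hL, zero_mul, zero_mul] at hW
  exact (isUnit_leadingCoeff_mul_left_eq_zero_iff
    (isUnit_leadingCoeff_prod _ fun i _ => hlc i)).mp hW
end

section
/- Let F ∈ K[x,y] be separable of y-degree d_y and x-degree d_x with irreducible analytic factors 𝓕₁,…,𝓕_s in K[[x]][y], let 𝔽 be a subfield of K, V(𝔽) = {μ ∈ 𝔽^s : all residues of G_μ/F lie in 𝔽} where G_μ = [Σ μ_i (F/𝓕_i)∂_y𝓕_i]^{d_x+1} is the truncation modulo x^{d_x+1}, Z = {μ ∈ 𝔽^s : G_μ = 0}, and S the 𝔽-span of the recombination vectors v₁,…,v_r of the rational factors. Then V(𝔽) = S ⊕ Z. -/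
/-!
Every analytic factor `𝓕ᵢ` divides exactly one rational factor `F_j`, and since `F` is squarefree
over `K((x))`, `F_j` is a unit times the product of the `𝓕ᵢ` dividing it. So the recombination
vector `v_j` is sent to `(F/F_j) ∂_y F_j`, whose `x`-degree is at most `d_x`: the truncation does
not touch it, and `μ ↦ G_μ` is an `𝔽`-linear map taking `v_j` to `(F/F_j) ∂_y F_j`.

At a root of `F_j` the residue of `∑ c_l (F/F_l) ∂_y F_l` is `c_j`. Conversely, the residues of
`G/F` at the roots of the irreducible `F_j` are Galois conjugate, so if one of them is some
`c_j ∈ 𝔽` they all are, and `G - ∑ c_j (F/F_j) ∂_y F_j`, of degree `< deg F`, vanishes at all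
the (simple) roots of `F`. Hence `V(𝔽)` is the preimage of the `𝔽`-span of the linearly
independent `(F/F_j) ∂_y F_j`, which is `S + Z` with `S ∩ Z = 0`.
-/

open Polynomial

open scoped Classical

set_option synthInstance.maxHeartbeats 1000000

noncomputable section

def truncX {K : Type*} [CommRing K] (n : ℕ) (P : Polynomial (PowerSeries K)) :
    Polynomial (Polynomial K) :=
  P.sum fun k a => Polynomial.C (PowerSeries.trunc n a) * Polynomial.X ^ k

section Regroup

variable {M ι κ : Type*} [Fintype ι] [Fintype κ]

theorem Squarefree.isRelPrime_of_ne [CommMonoid M] {f : ι → M} (h : Squarefree (∏ i, f i))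
    {i j : ι} (hij : i ≠ j) : IsRelPrime (f i) (f j) := by
  classical
  refine IsRelPrime.of_squarefree_mul (h.squarefree_of_dvd ?_)
  rw [← Finset.prod_pair hij]
  exact Finset.prod_dvd_prod_of_subset _ _ _ (Finset.subset_univ _)

theorem exists_isUnit_mul_prod_filter_dvd [CommMonoidWithZero M] [IsCancelMulZero M]
    [DecompositionMonoid M] {g : ι → M} {h : κ → M} {c : M} (hc : IsUnit c)
    (hprod : c * ∏ i, g i = ∏ l, h l) (hg : ∀ i, Prime (g i)) (hsq : Squarefree (∏ l, h l))
    (j : κ) : ∃ b, IsUnit b ∧ h j = b * ∏ i with g i ∣ h j, g i := by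
  classical
  nontriviality M
  have hsq_g : Squarefree (∏ i, g i) := hsq.squarefree_of_dvd (hprod ▸ dvd_mul_left _ _)
  have hex : ∀ i, ∃ l, g i ∣ h l := fun i => by
    obtain ⟨l, -, hl⟩ := (hg i).exists_mem_finset_dvd
      (hprod ▸ dvd_mul_of_dvd_right (Finset.dvd_prod_of_mem g (Finset.mem_univ i)) c)
    exact ⟨l, hl⟩
  choose σ hσ using hex
  have hfiber : ∀ l, Finset.univ.filter (g · ∣ h l) = Finset.univ.filter (σ · = l) := fun l =>
    Finset.filter_congr fun i _ => ⟨fun hi => by_contra fun hne =>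
      (hg i).not_isUnit (hsq.isRelPrime_of_ne hne (hσ i) hi), fun hi => hi ▸ hσ i⟩
  have hdvd : ∀ l, ∏ i with g i ∣ h l, g i ∣ h l := fun l =>
    Finset.prod_dvd_of_isRelPrime (fun i _ i' _ hii' => hsq_g.isRelPrime_of_ne hii')
      fun i hi => (Finset.mem_filter.mp hi).2
  choose R hR using hdvd
  have hRc : ∏ l, R l = c := by
    have hg0 : ∏ i, g i ≠ 0 := Finset.prod_ne_zero_iff.mpr fun i _ => (hg i).ne_zero
    refine mul_left_cancel₀ hg0 ?_
    calc (∏ i, g i) * ∏ l, R l = ∏ l, (∏ i with g i ∣ h l, g i) * R l := by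
          rw [Finset.prod_mul_distrib]
          congr 1
          simp_rw [hfiber]
          convert (Finset.prod_fiberwise Finset.univ σ g).symm
      _ = ∏ l, h l := Finset.prod_congr rfl fun l _ => (hR l).symm
      _ = (∏ i, g i) * c := by rw [← hprod, mul_comm]
  exact ⟨R j, isUnit_of_dvd_unit (hRc ▸ Finset.dvd_prod_of_mem R (Finset.mem_univ j)) hc,
    (hR j).trans (mul_comm _ _)⟩

end Regroup

theorem LinearMap.apply_mem_span_range_comp_iff {k V W ι : Type*} [Ring k] [AddCommGroup V]
    [Module k V] [AddCommGroup W] [Module k W] (G : V →ₗ[k] W) (v : ι → V) (μ : V) :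
    G μ ∈ Submodule.span k (Set.range (G ∘ v))
      ↔ ∃ a b, a ∈ Submodule.span k (Set.range v) ∧ G b = 0 ∧ μ = a + b := by
  rw [Set.range_comp, ← Submodule.map_span, ← Submodule.mem_comap, Submodule.comap_map_eq,
    Submodule.mem_sup]
  exact ⟨fun ⟨a, ha, b, hb, h⟩ => ⟨a, b, ha, hb, h.symm⟩,
    fun ⟨a, b, ha, hb, h⟩ => ⟨a, ha, b, hb, h.symm⟩⟩

namespace Polynomial

section CofactorDeriv

variable {R ι : Type*} [Fintype ι] [DecidableEq ι]

/-- The paper's `(F/F_j) ∂_y F_j` for `F = ∏ f`, written without division. -/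
def cofactorDeriv [CommSemiring R] (f : ι → R[X]) (j : ι) : R[X] :=
  (∏ i ∈ Finset.univ.erase j, f i) * derivative (f j)

theorem map_cofactorDeriv [CommSemiring R] {S : Type*} [CommSemiring S] (φ : R →+* S)
    (f : ι → R[X]) (j : ι) :
    (cofactorDeriv f j).map φ = cofactorDeriv (fun i => (f i).map φ) j := by
  simp only [cofactorDeriv, Polynomial.map_mul, Polynomial.map_prod, derivative_map]

theorem sum_cofactorDeriv [CommSemiring R] (f : ι → R[X]) :
    ∑ j, cofactorDeriv f j = derivative (∏ i, f i) :=
  derivative_prod_finset.symm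

variable {A : Type*} [CommSemiring R] [CommSemiring A] [Algebra R A] {f : ι → R[X]} {x : A}
  {j : ι}

theorem aeval_cofactorDeriv_of_ne (hx : aeval x (f j) = 0) {l : ι} (hl : l ≠ j) :
    aeval x (cofactorDeriv f l) = 0 := by
  rw [cofactorDeriv, map_mul, map_prod,
    Finset.prod_eq_zero (Finset.mem_erase.mpr ⟨hl.symm, Finset.mem_univ j⟩) hx, zero_mul]

theorem aeval_derivative_prod_of_aeval_eq_zero (hx : aeval x (f j) = 0) :
    aeval x (derivative (∏ i, f i)) = aeval x (cofactorDeriv f j) := by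
  rw [← sum_cofactorDeriv, map_sum,
    Finset.sum_eq_single j (fun l _ hl => aeval_cofactorDeriv_of_ne hx hl) (by simp)]

theorem aeval_sum_smul_cofactorDeriv (hx : aeval x (f j) = 0) (c : ι → R) :
    aeval x (∑ l, c l • cofactorDeriv f l)
      = algebraMap R A (c j) * aeval x (derivative (∏ i, f i)) := by
  rw [aeval_derivative_prod_of_aeval_eq_zero hx, map_sum, Finset.sum_eq_single j
    (fun l _ hl => by rw [map_smul, aeval_cofactorDeriv_of_ne hx hl, smul_zero]) (by simp),
    map_smul, Algebra.smul_def]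

end CofactorDeriv

section Domain

variable {R ι : Type*} [Fintype ι] [DecidableEq ι] [CommRing R] [IsDomain R] {f : ι → R[X]}

theorem degree_cofactorDeriv_lt (hf : ∀ i, f i ≠ 0) (j : ι) :
    (cofactorDeriv f j).degree < (∏ i, f i).degree := by
  rw [← Finset.prod_erase_mul _ _ (Finset.mem_univ j), cofactorDeriv, degree_mul, degree_mul]
  refine WithBot.add_lt_add_left ?_ (degree_derivative_lt (hf j))
  exact degree_ne_bot.mpr (Finset.prod_ne_zero_iff.mpr fun i _ => hf i)

theorem degree_sum_smul_cofactorDeriv_lt (hf : ∀ i, f i ≠ 0) (c : ι → R) :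
    (∑ i, c i • cofactorDeriv f i).degree < (∏ i, f i).degree := by
  refine (degree_sum_le _ _).trans_lt ((Finset.sup_lt_iff ?_).mpr fun i _ => ?_)
  · exact bot_lt_iff_ne_bot.mpr
      (degree_ne_bot.mpr (Finset.prod_ne_zero_iff.mpr fun i _ => hf i))
  · exact (degree_smul_le _ _).trans_lt (degree_cofactorDeriv_lt hf i)

theorem sum_C_mul_cofactorDeriv_eq {κ : Type*} [Fintype κ] [DecidableEq κ] {g : ι → R[X]}
    {h : κ → R[X]} {a b : R} {s : Finset ι} {j : κ} (hg : ∀ i ∈ s, g i ≠ 0)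
    (hprod : C a * ∏ i, g i = ∏ l, h l) (hj : h j = C b * ∏ i ∈ s, g i) :
    ∑ i ∈ s, C a * cofactorDeriv g i = cofactorDeriv h j := by
  have hcofactor : ∀ i ∈ s, C a * ∏ k ∈ Finset.univ.erase i, g k
      = (∏ l ∈ Finset.univ.erase j, h l) * C b * ∏ k ∈ s.erase i, g k := by
    intro i hi
    apply mul_right_cancel₀ (hg i hi)
    calc C a * (∏ k ∈ Finset.univ.erase i, g k) * g i = ∏ l, h l := by
          rw [mul_assoc, Finset.prod_erase_mul _ _ (Finset.mem_univ i), hprod]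
      _ = (∏ l ∈ Finset.univ.erase j, h l) * h j :=
          (Finset.prod_erase_mul _ _ (Finset.mem_univ j)).symm
      _ = _ := by rw [hj, ← Finset.prod_erase_mul _ _ hi]; ring
  calc ∑ i ∈ s, C a * cofactorDeriv g i
      = ∑ i ∈ s, (∏ l ∈ Finset.univ.erase j, h l) * C b *
          ((∏ k ∈ s.erase i, g k) * derivative (g i)) := Finset.sum_congr rfl fun i hi => by
        rw [cofactorDeriv, ← mul_assoc, hcofactor i hi, mul_assoc]
    _ = (∏ l ∈ Finset.univ.erase j, h l) * C b * derivative (∏ i ∈ s, g i) := by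
        rw [← Finset.mul_sum, derivative_prod_finset]
    _ = cofactorDeriv h j := by rw [cofactorDeriv, hj, derivative_C_mul, mul_assoc]

theorem sum_filter_dvd_C_mul_cofactorDeriv [DecompositionMonoid R[X]] {κ : Type*} [Fintype κ]
    [DecidableEq κ] {g : ι → R[X]} {h : κ → R[X]} {a : R} (ha : IsUnit a)
    (hprod : C a * ∏ i, g i = ∏ l, h l) (hg : ∀ i, Prime (g i)) (hsq : Squarefree (∏ l, h l))
    (j : κ) : ∑ i with g i ∣ h j, C a * cofactorDeriv g i = cofactorDeriv h j := by
  obtain ⟨b, hb, hbj⟩ := exists_isUnit_mul_prod_filter_dvd (isUnit_C.mpr ha) hprod hg hsq j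
  obtain ⟨b, -, rfl⟩ := Polynomial.isUnit_iff.mp hb
  exact sum_C_mul_cofactorDeriv_eq (fun i _ => (hg i).ne_zero) hprod hbj

end Domain

section Residue

variable {L Ω ι : Type*} [Field L] [Field Ω] [Algebra L Ω] [Fintype ι] [DecidableEq ι]
  {f : ι → L[X]}

theorem aeval_sum_smul_cofactorDeriv_div (hsep : (∏ i, f i).Separable) {x : Ω} {j : ι}
    (hx : aeval x (f j) = 0) (c : ι → L) :
    aeval x (∑ l, c l • cofactorDeriv f l) / aeval x (derivative (∏ i, f i))
      = algebraMap L Ω (c j) := by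
  have hroot : aeval x (∏ i, f i) = 0 := by
    rw [map_prod]; exact Finset.prod_eq_zero (Finset.mem_univ j) hx
  rw [aeval_sum_smul_cofactorDeriv hx,
    mul_div_cancel_right₀ _ (hsep.aeval_derivative_ne_zero hroot)]

theorem linearIndependent_cofactorDeriv (hsep : (∏ i, f i).Separable)
    (hf : ∀ i, 0 < (f i).degree) : LinearIndependent L (cofactorDeriv f) := by
  refine Fintype.linearIndependent_iff.mpr fun c hc j => ?_
  obtain ⟨x, hx⟩ := IsAlgClosed.exists_aeval_eq_zero (AlgebraicClosure L) (f j) (hf j).ne'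
  have hcj := aeval_sum_smul_cofactorDeriv_div hsep hx c
  rwa [hc, map_zero, zero_div, eq_comm, map_eq_zero] at hcj

theorem aeval_div_aeval_eq_of_irreducible [Normal L Ω] {g : L[X]} (hg : Irreducible g)
    {x y : Ω} (hx : aeval x g = 0) (hy : aeval y g = 0) {p q : L[X]} {c : L}
    (h : aeval x p / aeval x q = algebraMap L Ω c) :
    aeval y p / aeval y q = algebraMap L Ω c := by
  have hconj : IsConjRoot L y x := isConjRoot_of_aeval_eq_zero (Algebra.IsIntegral.isIntegral y)
    (by rw [← minpoly.eq_of_irreducible hg hy, map_mul, hx, zero_mul])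
  obtain ⟨σ, rfl⟩ := hconj.exists_algEquiv
  rw [aeval_algHom_apply, aeval_algHom_apply, ← map_div₀, h, AlgEquiv.commutes]

theorem eq_zero_of_degree_lt_of_aeval_eq_zero [IsAlgClosed Ω] {g q : L[X]} (hsep : g.Separable)
    (hq : q.degree < g.degree) (h : ∀ x : Ω, aeval x g = 0 → aeval x q = 0) : q = 0 := by
  by_contra hq0
  have hinj := (algebraMap L Ω).injective
  have hg0 : g.map (algebraMap L Ω) ≠ 0 := (Polynomial.map_ne_zero_iff hinj).mpr hsep.ne_zero
  have hq0' : q.map (algebraMap L Ω) ≠ 0 := (Polynomial.map_ne_zero_iff hinj).mpr hq0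
  have hdvd : g.map (algebraMap L Ω) ∣ q.map (algebraMap L Ω) := by
    refine (IsAlgClosed.dvd_iff_roots_le_roots hg0 hq0').mpr
      ((Multiset.le_iff_subset (nodup_roots hsep.map)).mpr fun x hx => ?_)
    rw [← aroots_def, mem_aroots] at hx ⊢
    exact ⟨hq0, h x hx.2⟩
  refine hq0' (eq_zero_of_dvd_of_degree_lt hdvd ?_)
  rwa [degree_map, degree_map]

theorem exists_eq_sum_smul_cofactorDeriv [IsAlgClosed Ω] [Normal L Ω] {M : Type*} (e : M → L)
    (hsep : (∏ i, f i).Separable) (hirr : ∀ i, Irreducible (f i)) {p : L[X]}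
    (hp : p.degree < (∏ i, f i).degree)
    (hres : ∀ x : Ω, aeval x (∏ i, f i) = 0 →
      aeval x p / aeval x (derivative (∏ i, f i)) ∈ Set.range (algebraMap L Ω ∘ e)) :
    ∃ c : ι → M, p = ∑ i, e (c i) • cofactorDeriv f i := by
  have hprod : ∀ {x : Ω} {i}, aeval x (f i) = 0 → aeval x (∏ i, f i) = 0 := fun hx => by
    rw [map_prod]; exact Finset.prod_eq_zero (Finset.mem_univ _) hx
  choose x hx using fun i =>
    IsAlgClosed.exists_aeval_eq_zero Ω (f i) (degree_pos_of_irreducible (hirr i)).ne'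
  choose c hc using fun i => hres (x i) (hprod (hx i))
  refine ⟨c, sub_eq_zero.mp
    (eq_zero_of_degree_lt_of_aeval_eq_zero (Ω := Ω) hsep ?_ fun y hy => ?_)⟩
  · exact (degree_sub_le _ _).trans_lt
      (max_lt hp (degree_sum_smul_cofactorDeriv_lt (fun i => (hirr i).ne_zero) _))
  · obtain ⟨i, -, hi⟩ := Finset.prod_eq_zero_iff.mp (by rwa [map_prod] at hy)
    have hpi := aeval_div_aeval_eq_of_irreducible (hirr i) (hx i) hi (hc i).symm
    rw [div_eq_iff (hsep.aeval_derivative_ne_zero hy)] at hpi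
    rw [map_sub, aeval_sum_smul_cofactorDeriv hi, hpi, sub_self]

end Residue

section FractionField

variable {A L ι : Type*} [CommRing A] [Field L] [Algebra A L] [Fintype ι] [DecidableEq ι]
  {f : ι → A[X]}

theorem map_sum_smul_cofactorDeriv {k : Type*} [CommSemiring k] [Algebra k A] (c : ι → k) :
    (∑ i, c i • cofactorDeriv f i).map (algebraMap A L)
      = ∑ i, algebraMap A L (algebraMap k A (c i)) •
          cofactorDeriv (fun i => (f i).map (algebraMap A L)) i := by
  rw [Polynomial.map_sum]
  refine Finset.sum_congr rfl fun i _ => ?_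
  rw [← algebraMap_smul A (c i), Polynomial.map_smul, map_cofactorDeriv]

variable [FaithfulSMul A L]

theorem linearIndependent_cofactorDeriv_of_map {k : Type*} [CommRing k] [Algebra k A]
    (hk : Function.Injective (algebraMap k A))
    (hsep : ((∏ i, f i).map (algebraMap A L)).Separable) (hf : ∀ i, 0 < (f i).degree) :
    LinearIndependent k (cofactorDeriv f) := by
  have hinj := FaithfulSMul.algebraMap_injective A L
  rw [Polynomial.map_prod] at hsep
  have hindep := linearIndependent_cofactorDeriv hsep
    fun i => (degree_map_eq_of_injective hinj _).symm ▸ hf i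
  refine Fintype.linearIndependent_iff.mpr fun c hc j => ?_
  have hc' := congrArg (Polynomial.map (algebraMap A L)) hc
  rw [map_sum_smul_cofactorDeriv, Polynomial.map_zero] at hc'
  exact (injective_iff_map_eq_zero ((algebraMap A L).comp (algebraMap k A))).mp (hinj.comp hk) _
    (Fintype.linearIndependent_iff.mp hindep _ hc' j)

theorem residues_mem_range_iff_mem_span {k : Type*} [CommSemiring k] [Algebra k A]
    (hsep : ((∏ i, f i).map (algebraMap A L)).Separable)
    (hirr : ∀ i, Irreducible ((f i).map (algebraMap A L))) {P : A[X]}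
    (hP : P.degree < (∏ i, f i).degree) :
    (∀ x : AlgebraicClosure L,
      eval x ((∏ i, f i).map ((algebraMap L (AlgebraicClosure L)).comp (algebraMap A L))) = 0 →
      eval x (P.map ((algebraMap L (AlgebraicClosure L)).comp (algebraMap A L))) /
          eval x (derivative
            ((∏ i, f i).map ((algebraMap L (AlgebraicClosure L)).comp (algebraMap A L)))) ∈
        Set.range fun c : k =>
          algebraMap L (AlgebraicClosure L) (algebraMap A L (algebraMap k A c)))
      ↔ P ∈ Submodule.span k (Set.range (cofactorDeriv f)) := by
  have hinj := FaithfulSMul.algebraMap_injective A L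
  have heval : ∀ (Q : A[X]) (x : AlgebraicClosure L),
      eval x (Q.map ((algebraMap L _).comp (algebraMap A L))) = aeval x (Q.map (algebraMap A L)) :=
    fun Q x => by rw [← Polynomial.map_map, eval_map_algebraMap]
  have hderiv : ∀ (Q : A[X]) (x : AlgebraicClosure L),
      eval x (derivative (Q.map ((algebraMap L _).comp (algebraMap A L))))
        = aeval x (derivative (Q.map (algebraMap A L))) :=
    fun Q x => by rw [← Polynomial.map_map, derivative_map, eval_map_algebraMap]
  simp only [hderiv, heval]
  simp only [Polynomial.map_prod]
  rw [Polynomial.map_prod] at hsep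
  rw [Submodule.mem_span_range_iff_exists_fun]
  constructor
  · intro hres
    obtain ⟨c, hc⟩ := exists_eq_sum_smul_cofactorDeriv
      (fun c : k => algebraMap A L (algebraMap k A c)) hsep hirr
      (by rwa [← Polynomial.map_prod, degree_map_eq_of_injective hinj,
        degree_map_eq_of_injective hinj]) hres
    exact ⟨c, map_injective _ hinj (by rw [map_sum_smul_cofactorDeriv, hc])⟩
  · rintro ⟨c, rfl⟩ x hx
    obtain ⟨i, -, hi⟩ := Finset.prod_eq_zero_iff.mp (by rwa [map_prod] at hx)
    rw [map_sum_smul_cofactorDeriv, aeval_sum_smul_cofactorDeriv_div hsep hi]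
    exact ⟨c i, rfl⟩

end FractionField

section Bivariate

open Bivariate

variable {R : Type*} [CommSemiring R]

theorem coeff_coeff_swap (P : R[X][X]) (a k : ℕ) :
    ((swap P).coeff a).coeff k = (P.coeff k).coeff a := by
  induction P using Polynomial.induction_on' with
  | add P Q hP hQ => simp only [map_add, coeff_add, hP, hQ]
  | monomial n f =>
    rw [swap_monomial, coeff_mul_C, coeff_map, coeff_mul_X_pow', coeff_C, coeff_monomial]
    split_ifs <;> first | omega | simp

theorem natDegree_coeff_le_natDegree_swap (P : R[X][X]) (k : ℕ) :
    (P.coeff k).natDegree ≤ (swap P).natDegree :=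
  natDegree_le_iff_coeff_eq_zero.mpr fun a ha => by
    rw [← coeff_coeff_swap, coeff_eq_zero_of_natDegree_lt ha, coeff_zero]

theorem natDegree_swap_le {P : R[X][X]} {d : ℕ} (h : ∀ k, (P.coeff k).natDegree ≤ d) :
    (swap P).natDegree ≤ d :=
  natDegree_le_iff_coeff_eq_zero.mpr fun a ha => Polynomial.ext fun k => by
    rw [coeff_coeff_swap, coeff_eq_zero_of_natDegree_lt ((h k).trans_lt ha), coeff_zero]

theorem natDegree_swap (P : R[X][X]) :
    (swap P).natDegree = P.support.sup fun k => (P.coeff k).natDegree := by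
  refine le_antisymm (natDegree_swap_le fun k => ?_)
    (Finset.sup_le fun k _ => natDegree_coeff_le_natDegree_swap P k)
  by_cases hk : k ∈ P.support
  · exact Finset.le_sup (f := fun k => (P.coeff k).natDegree) hk
  · simp [notMem_support_iff.mp hk]

theorem natDegree_swap_derivative_le (P : R[X][X]) :
    (swap (derivative P)).natDegree ≤ (swap P).natDegree := by
  refine natDegree_swap_le fun k => ?_
  rw [coeff_derivative, ← Nat.cast_succ]
  refine natDegree_mul_le.trans ?_
  rw [natDegree_natCast, add_zero]
  exact natDegree_coeff_le_natDegree_swap P (k + 1)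

theorem natDegree_swap_cofactorDeriv_le {R ι : Type*} [CommRing R] [IsDomain R] [Fintype ι]
    [DecidableEq ι] {f : ι → R[X][X]} (hf : ∀ i, f i ≠ 0) (j : ι) :
    (swap (cofactorDeriv f j)).natDegree ≤ (swap (∏ i, f i)).natDegree := by
  have hswap : ∀ {P : R[X][X]}, P ≠ 0 → swap P ≠ 0 := fun hP =>
    (map_ne_zero_iff _ swap.injective).mpr hP
  rw [← Finset.prod_erase_mul _ _ (Finset.mem_univ j), cofactorDeriv, map_mul, map_mul,
    natDegree_mul (hswap (Finset.prod_ne_zero_iff.mpr fun i _ => hf i)) (hswap (hf j))]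
  exact natDegree_mul_le.trans (Nat.add_le_add_left (natDegree_swap_derivative_le _) _)

end Bivariate

theorem IsPrimitive.squarefree_of_squarefree_map {R S : Type*} [CommRing R] [CommRing S]
    [NoZeroDivisors S] {φ : R →+* S} (hφ : Function.Injective φ) {p : R[X]}
    (hp : p.IsPrimitive) (hsq : Squarefree (p.map φ)) : Squarefree p := by
  intro d hd
  have hdeg : d.natDegree = 0 := by
    rw [← natDegree_map_eq_of_injective hφ]
    exact natDegree_eq_zero_of_isUnit
      (hsq _ (by simpa only [Polynomial.map_mul] using Polynomial.map_dvd φ hd))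
  rw [eq_C_of_natDegree_eq_zero hdeg] at hd ⊢
  exact isUnit_C.mpr (hp _ ((dvd_mul_right _ _).trans hd))

section PowerSeries

variable {K : Type*} [Field K]

theorem IsPrimitive.map_coeToPowerSeries {F : K[X][X]} (hF : F.IsPrimitive) :
    (F.map coeToPowerSeries.ringHom).IsPrimitive := by
  intro a ha
  by_contra hunit
  have hX : C (X : K[X]) ∣ F := by
    refine (C_dvd_iff_dvd_coeff _ _).mpr fun k => X_dvd_iff.mpr ?_
    have hXa : PowerSeries.X ∣ a := PowerSeries.X_dvd_iff.mpr (by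
      rwa [PowerSeries.isUnit_iff_constantCoeff, isUnit_iff_ne_zero, not_not] at hunit)
    have := PowerSeries.X_dvd_iff.mp (hXa.trans ((C_dvd_iff_dvd_coeff _ _).mp ha k))
    rwa [coeff_map, coeToPowerSeries.ringHom_apply,
      ← PowerSeries.coeff_zero_eq_constantCoeff_apply, coeff_coe] at this
  exact not_isUnit_X (hF _ hX)

open scoped RatFunc in
theorem squarefree_map_coeToPowerSeries {F : K[X][X]} (hF : F.IsPrimitive)
    (hsep : (F.map (algebraMap K[X] (RatFunc K))).Separable) :
    Squarefree (F.map coeToPowerSeries.ringHom) := by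
  refine hF.map_coeToPowerSeries.squarefree_of_squarefree_map
    (φ := HahnSeries.ofPowerSeries ℤ K) HahnSeries.ofPowerSeries_injective ?_
  have hcomm : (HahnSeries.ofPowerSeries ℤ K).comp coeToPowerSeries.ringHom
      = (algebraMap (RatFunc K) (LaurentSeries K)).comp (algebraMap K[X] (RatFunc K)) :=
    RingHom.ext fun P => by
      simp only [RingHom.comp_apply, coeToPowerSeries.ringHom_apply, RatFunc.coe_coe]; rfl
  rw [Polynomial.map_map, hcomm, ← Polynomial.map_map]
  exact hsep.map.squarefree

end PowerSeries

end Polynomial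

section Truncation

variable {R : Type*} [CommRing R]

theorem coeff_truncX (n : ℕ) (P : (PowerSeries R)[X]) (k : ℕ) :
    (truncX n P).coeff k = PowerSeries.trunc n (P.coeff k) := by
  rw [truncX, Polynomial.sum, finsetSum_coeff]
  simp only [coeff_C_mul_X_pow]
  rw [Finset.sum_ite_eq, ite_eq_left_iff]
  intro hk
  rw [notMem_support_iff.mp hk, map_zero]

theorem truncX_sum_C_mul {ι : Type*} [Fintype ι] (n : ℕ) (a : ι → R)
    (Q : ι → (PowerSeries R)[X]) :
    truncX n (∑ i, C (PowerSeries.C (a i)) * Q i) = ∑ i, a i • truncX n (Q i) := by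
  ext k : 1
  simp only [coeff_truncX, finsetSum_coeff, coeff_C_mul, map_sum, PowerSeries.trunc_C_mul,
    coeff_smul, smul_eq_C_mul]

theorem degree_truncX_le (n : ℕ) (P : (PowerSeries R)[X]) : (truncX n P).degree ≤ P.degree :=
  (degree_le_iff_coeff_zero _ _).mpr fun k hk => by
    rw [coeff_truncX, coeff_eq_zero_of_degree_lt hk, map_zero]

theorem truncX_map_coeToPowerSeries {n : ℕ} {P : R[X][X]}
    (h : ∀ k, (P.coeff k).natDegree < n) : truncX n (P.map coeToPowerSeries.ringHom) = P := by
  ext k : 1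
  rw [coeff_truncX, coeff_map, coeToPowerSeries.ringHom_apply,
    PowerSeries.trunc_coe_eq_self (h k)]

end Truncation

section AnalyticFactors

variable {K ι κ : Type*} [Field K] [Fintype ι] [DecidableEq ι] [Fintype κ] [DecidableEq κ]

theorem degree_truncX_sum_C_mul_cofactorDeriv_lt {g : ι → (PowerSeries K)[X]}
    (hg : ∀ i, g i ≠ 0) (n : ℕ) (a : ι → K) (u : PowerSeries K) :
    (truncX n (∑ i, C (PowerSeries.C (a i)) * (C u * cofactorDeriv g i))).degree
      < (∏ i, g i).degree := by
  have hterm : ∀ i, C (PowerSeries.C (a i)) * (C u * cofactorDeriv g i)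
      = (PowerSeries.C (a i) * u) • cofactorDeriv g i := fun i => by
    rw [smul_eq_C_mul, C_mul, mul_assoc]
  rw [Finset.sum_congr rfl fun i _ => hterm i]
  exact (degree_truncX_le _ _).trans_lt (degree_sum_smul_cofactorDeriv_lt hg _)

/-- `G_{v_j} = (F/F_j) ∂_y F_j`: the analytic factors dividing `F_j` recombine into it, and
its `x`-degree is below the truncation order. -/
theorem truncX_sum_filter_dvd_C_mul_cofactorDeriv {f : κ → K[X][X]} (hf : ∀ j, Irreducible (f j))
    (hprim : (∏ j, f j).IsPrimitive)
    (hsep : ((∏ j, f j).map (algebraMap K[X] (RatFunc K))).Separable) {u : PowerSeries K}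
    (hu : IsUnit u) {g : ι → (PowerSeries K)[X]} (hg : ∀ i, Irreducible (g i))
    (hfa : (∏ j, f j).map coeToPowerSeries.ringHom = C u * ∏ i, g i) {n : ℕ}
    (hn : ((∏ j, f j).support.sup fun k => ((∏ j, f j).coeff k).natDegree) < n) (j : κ) :
    truncX n (∑ i with g i ∣ (f j).map coeToPowerSeries.ringHom, C u * cofactorDeriv g i)
      = cofactorDeriv f j := by
  have hprod : C u * ∏ i, g i = ∏ j, (f j).map coeToPowerSeries.ringHom := by
    rw [← hfa, Polynomial.map_prod]
  rw [sum_filter_dvd_C_mul_cofactorDeriv hu hprod (fun i => (hg i).prime)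
    (by rw [← Polynomial.map_prod]; exact squarefree_map_coeToPowerSeries hprim hsep),
    ← map_cofactorDeriv]
  exact truncX_map_coeToPowerSeries fun k => ((natDegree_coeff_le_natDegree_swap _ k).trans
    ((natDegree_swap_cofactorDeriv_le (fun j => (hf j).ne_zero) j).trans
      (natDegree_swap _).le)).trans_lt hn

end AnalyticFactors

theorem stmt10_general {K : Type*} [Field K] (𝔽 : Subfield K)
    (F : Polynomial (Polynomial K)) (hprim : F.IsPrimitive)
    (hsep : (F.map (algebraMap (Polynomial K) (RatFunc K))).Separable)
    (dx : ℕ) (hdx : dx = F.support.sup fun k => (F.coeff k).natDegree)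
    (r : ℕ) (Fj : Fin r → Polynomial (Polynomial K))
    (hF : F = ∏ j, Fj j) (hFirr : ∀ j, Irreducible (Fj j))
    (s : ℕ) (u : PowerSeries K) (hu : IsUnit u)
    (𝓕 : Fin s → Polynomial (PowerSeries K))
    (hfa : F.map Polynomial.coeToPowerSeries.ringHom = Polynomial.C u * ∏ i, 𝓕 i)
    (h𝓕irr : ∀ i, Irreducible (𝓕 i))
    (v : Fin r → Fin s → 𝔽)
    (hv : ∀ j i, v j i =
      if 𝓕 i ∣ (Fj j).map Polynomial.coeToPowerSeries.ringHom then 1 else 0)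
    (Gm : (Fin s → 𝔽) → Polynomial (Polynomial K))
    (hGm : ∀ μ, Gm μ = truncX (dx + 1)
      (∑ i, Polynomial.C (PowerSeries.C (μ i : K)) *
        ((Polynomial.C u * ∏ k ∈ Finset.univ.erase i, 𝓕 k) * derivative (𝓕 i)))) :
    (∀ μ : Fin s → 𝔽,
      (∀ φ : AlgebraicClosure (RatFunc K),
          Polynomial.eval φ (F.map ((algebraMap (RatFunc K) (AlgebraicClosure (RatFunc K))).comp
              (algebraMap (Polynomial K) (RatFunc K)))) = 0 →
          Polynomial.eval φ ((Gm μ).map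
              ((algebraMap (RatFunc K) (AlgebraicClosure (RatFunc K))).comp
                (algebraMap (Polynomial K) (RatFunc K)))) /
            Polynomial.eval φ (derivative (F.map
              ((algebraMap (RatFunc K) (AlgebraicClosure (RatFunc K))).comp
                (algebraMap (Polynomial K) (RatFunc K))))) ∈
            Set.range (fun c : 𝔽 =>
              algebraMap (RatFunc K) (AlgebraicClosure (RatFunc K))
                (algebraMap (Polynomial K) (RatFunc K) (Polynomial.C (c : K)))))
        ↔
      (∃ a b : Fin s → 𝔽,
        a ∈ Submodule.span 𝔽 (Set.range v) ∧ Gm b = 0 ∧ μ = a + b)) ∧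
    (∀ μ : Fin s → 𝔽, μ ∈ Submodule.span 𝔽 (Set.range v) → Gm μ = 0 → μ = 0) := by
  subst hF
  have hcof : ∀ i, (C u * ∏ k ∈ Finset.univ.erase i, 𝓕 k) * derivative (𝓕 i)
      = C u * cofactorDeriv 𝓕 i := fun i => mul_assoc _ _ _
  simp only [hcof] at hGm
  set G := Fintype.linearCombination 𝔽 fun i => truncX (dx + 1) (C u * cofactorDeriv 𝓕 i)
  have hG : Gm = G := funext fun μ => by
    rw [hGm, truncX_sum_C_mul, Fintype.linearCombination_apply]; rfl
  have hirr : ∀ j, Irreducible ((Fj j).map (algebraMap K[X] (RatFunc K))) := fun j =>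
    (isPrimitive_of_dvd hprim (Finset.dvd_prod_of_mem _ (Finset.mem_univ j))
      |>.irreducible_iff_irreducible_map_fraction_map).mp (hFirr j)
  have hGv : G ∘ v = cofactorDeriv Fj := funext fun j => by
    rw [Function.comp_apply, ← hG, hGm, ← truncX_sum_filter_dvd_C_mul_cofactorDeriv hFirr hprim
      hsep hu h𝓕irr hfa (n := dx + 1) (by omega) j, Finset.sum_filter]
    exact congrArg (truncX _) (Finset.sum_congr rfl fun i _ => by rw [hv]; split_ifs <;> simp)
  have hdeg : ∀ μ, (Gm μ).degree < (∏ j, Fj j).degree := fun μ => by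
    rw [hGm, ← degree_map_eq_of_injective (f := coeToPowerSeries.ringHom) (coe_injective K)
      (∏ j, Fj j), hfa, degree_C_mul hu.ne_zero]
    exact degree_truncX_sum_C_mul_cofactorDeriv_lt (fun i => (h𝓕irr i).ne_zero) _ _ _
  have hli : LinearIndependent 𝔽 (G ∘ v) := hGv ▸ linearIndependent_cofactorDeriv_of_map
    (algebraMap 𝔽 K[X]).injective hsep fun j => degree_map_eq_of_injective
      (FaithfulSMul.algebraMap_injective K[X] (RatFunc K)) (Fj j) ▸
        degree_pos_of_irreducible (hirr j)
  refine ⟨fun μ => ?_, fun μ hμ h0 =>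
    Submodule.disjoint_def.mp (Submodule.range_ker_disjoint hli) μ hμ (by rwa [hG] at h0)⟩
  refine (residues_mem_range_iff_mem_span (k := 𝔽) hsep hirr (hdeg μ)).trans ?_
  rw [← hGv, hG]
  exact G.apply_mem_span_range_comp_iff v μ

/-- `V(𝔽) = S ⊕ Z`: with `F ∈ K[x,y]` squarefree, separable and primitive in
`y`, `F = F₁⋯F_r` its rational factorization, `F = u·𝓕₁⋯𝓕_s` its analytic factorization,
`G_μ = [Σ μ_i (F/𝓕_i)∂_y𝓕_i]^{d_x+1}`, `𝔽` a subfield of `K`, the space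
`V(𝔽) = {μ : residues of G_μ/F lie in 𝔽}` is the direct sum of the span `S` of the
recombination vectors and of `Z = {μ : G_μ = 0}`. -/
theorem stmt10 {K : Type*} [Field K] (𝔽 : Subfield K)
    (F : Polynomial (Polynomial K)) (hsq : Squarefree F) (hprim : F.IsPrimitive)
    (hsep : (F.map (algebraMap (Polynomial K) (RatFunc K))).Separable)
    (dx : ℕ) (hdx : dx = F.support.sup fun k => (F.coeff k).natDegree)
    (r : ℕ) (Fj : Fin r → Polynomial (Polynomial K))
    (hF : F = ∏ j, Fj j) (hFirr : ∀ j, Irreducible (Fj j))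
    (s : ℕ) (u : PowerSeries K) (hu : IsUnit u)
    (𝓕 : Fin s → Polynomial (PowerSeries K))
    (hfa : F.map Polynomial.coeToPowerSeries.ringHom = Polynomial.C u * ∏ i, 𝓕 i)
    (h𝓕irr : ∀ i, Irreducible (𝓕 i))
    (v : Fin r → Fin s → 𝔽)
    (hv : ∀ j i, v j i =
      if 𝓕 i ∣ (Fj j).map Polynomial.coeToPowerSeries.ringHom then 1 else 0)
    (Gm : (Fin s → 𝔽) → Polynomial (Polynomial K))
    (hGm : ∀ μ, Gm μ = truncX (dx + 1)
      (∑ i, Polynomial.C (PowerSeries.C (μ i : K)) *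
        ((Polynomial.C u * ∏ k ∈ Finset.univ.erase i, 𝓕 k) * derivative (𝓕 i)))) :
    (∀ μ : Fin s → 𝔽,
      (∀ φ : AlgebraicClosure (RatFunc K),
          Polynomial.eval φ (F.map ((algebraMap (RatFunc K) (AlgebraicClosure (RatFunc K))).comp
              (algebraMap (Polynomial K) (RatFunc K)))) = 0 →
          Polynomial.eval φ ((Gm μ).map
              ((algebraMap (RatFunc K) (AlgebraicClosure (RatFunc K))).comp
                (algebraMap (Polynomial K) (RatFunc K)))) /
            Polynomial.eval φ (derivative (F.map
              ((algebraMap (RatFunc K) (AlgebraicClosure (RatFunc K))).comp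
                (algebraMap (Polynomial K) (RatFunc K))))) ∈
            Set.range (fun c : 𝔽 =>
              algebraMap (RatFunc K) (AlgebraicClosure (RatFunc K))
                (algebraMap (Polynomial K) (RatFunc K) (Polynomial.C (c : K)))))
        ↔
      (∃ a b : Fin s → 𝔽,
        a ∈ Submodule.span 𝔽 (Set.range v) ∧ Gm b = 0 ∧ μ = a + b)) ∧
    (∀ μ : Fin s → 𝔽, μ ∈ Submodule.span 𝔽 (Set.range v) → Gm μ = 0 → μ = 0) :=
  stmt10_general 𝔽 F hprim hsep dx hdx r Fj hF hFirr s u hu 𝓕 hfa h𝓕irr v hv Gm hGm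
end
end

section
/- Let F, G ∈ K[x,y] with F separable in y of y-degree d_y. Then all residues ρ_k of G/F at the roots of F (k=1,…,d_y) satisfy ρ_k' = 0 if and only if F divides D(G) := (G_x F_y − G_y F_x)F_y − (F_{xy}F_y − F_{yy}F_x)G in K(x)[y]. -/
/-!
At a root `φ` of `F`, differentiating `F(x, φ) = 0` gives `F_x(φ) = -F_y(φ) φ'`, and with the
chain rule this turns `D(G)(φ)` into `F_y(φ) (F_y(φ) G(φ)' - G(φ) F_y(φ)') = F_y(φ)³ ρ'`.
Separability makes `F_y(φ) ≠ 0` and the roots of `F` simple, so over the algebraic closure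
`F ∣ D(G)` exactly when `D(G)` vanishes at every root of `F`, i.e. when every `ρ' = 0`.
-/

open Polynomial

noncomputable section

/-- The partial derivative with respect to `x` of a bivariate polynomial in `K[x][y]`
(coefficientwise derivative). -/
def pderivX {K : Type*} [CommRing K] (P : Polynomial (Polynomial K)) :
    Polynomial (Polynomial K) :=
  P.sum fun k a => Polynomial.C (derivative a) * Polynomial.X ^ k

section pderivX

variable {R : Type*} [CommRing R]

lemma pderivX_add (P Q : R[X][X]) : pderivX (P + Q) = pderivX P + pderivX Q :=
  sum_add_index P Q _ (fun _ => by simp) fun _ _ _ => by rw [map_add, map_add, add_mul]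

lemma pderivX_monomial (n : ℕ) (a : R[X]) : pderivX (monomial n a) = C (derivative a) * X ^ n :=
  sum_monomial_index a _ (by simp)

end pderivX

/-- The paper's operator `D(G)`. -/
def residueDerivNumerator {R : Type*} [CommRing R] (F G : R[X][X]) : R[X][X] :=
  (pderivX G * derivative F - derivative G * pderivX F) * derivative F -
    (pderivX (derivative F) * derivative F - derivative (derivative F) * pderivX F) * G

namespace Derivation

variable {K : Type*} [CommRing K]

section CommRing

variable {A : Type*} [CommRing A] [Algebra K A] (D : Derivation K A A)

lemma map_polynomial_ringHom (r : K[X] →+* A) (hr : ∀ c, r (C c) = algebraMap K A c)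
    (p : K[X]) : D (r p) = r (derivative p) * D (r X) := by
  have hr_aeval : r = (aeval (r X)).toRingHom := ringHom_ext (by simpa using hr) (by simp)
  rw [hr_aeval]
  simp

lemma map_eval_map (r : K[X] →+* A) (hD : ∀ p, D (r p) = r (derivative p)) (P : K[X][X])
    (φ : A) :
    D ((P.map r).eval φ) = ((pderivX P).map r).eval φ + ((derivative P).map r).eval φ * D φ := by
  induction P using Polynomial.induction_on' with
  | add P Q hP hQ =>
    simp only [Polynomial.map_add, eval_add, map_add, hP, hQ, pderivX_add]
    ring
  | monomial n a =>
    simp only [pderivX_monomial, derivative_monomial, Polynomial.map_monomial, eval_monomial,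
      Polynomial.map_mul, Polynomial.map_pow, map_C, map_X, eval_mul, eval_pow, eval_C, eval_X,
      leibniz, leibniz_pow, hD, map_mul, _root_.map_natCast, smul_eq_mul, nsmul_eq_mul]
    ring

lemma eval_map_residueDerivNumerator (r : K[X] →+* A) (hD : ∀ p, D (r p) = r (derivative p))
    {F : K[X][X]} (G : K[X][X]) {φ : A} (hφ : (F.map r).eval φ = 0) :
    ((residueDerivNumerator F G).map r).eval φ =
      (((derivative F).map r).eval φ * D ((G.map r).eval φ) -
        (G.map r).eval φ * D (((derivative F).map r).eval φ)) * ((derivative F).map r).eval φ := by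
  -- `hF : 0 = F_x(φ) + F_y(φ) φ'` eliminates `F_x(φ)`
  have hF := D.map_eval_map r hD F φ
  rw [hφ, map_zero] at hF
  simp only [residueDerivNumerator, Polynomial.map_sub, Polynomial.map_mul, eval_sub, eval_mul,
    D.map_eval_map r hD]
  linear_combination (((derivative G).map r).eval φ * ((derivative F).map r).eval φ -
    (G.map r).eval φ * ((derivative (derivative F)).map r).eval φ) * hF

end CommRing

lemma residue_deriv_eq_zero_iff {A : Type*} [Field A] [Algebra K A] (D : Derivation K A A)
    (r : K[X] →+* A) (hD : ∀ p, D (r p) = r (derivative p)) {F : K[X][X]} (G : K[X][X]) {φ : A}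
    (hφ : (F.map r).eval φ = 0) (hFy : ((derivative F).map r).eval φ ≠ 0) :
    D ((G.map r).eval φ / ((derivative F).map r).eval φ) = 0 ↔
      ((residueDerivNumerator F G).map r).eval φ = 0 := by
  rw [D.eval_map_residueDerivNumerator r hD G hφ, leibniz_div]
  simp [hFy]

end Derivation

lemma Polynomial.Separable.dvd_iff_forall_isRoot {k : Type*} [Field k] [IsAlgClosed k]
    {p q : k[X]} (hp : p.Separable) : p ∣ q ↔ ∀ x, p.IsRoot x → q.IsRoot x := by
  rcases eq_or_ne q 0 with rfl | hq
  · simp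
  rw [IsAlgClosed.dvd_iff_roots_le_roots hp.ne_zero hq, Multiset.le_iff_subset (nodup_roots hp)]
  simp [Multiset.subset_iff, hp.ne_zero, hq]

/-- Let `F, G ∈ K[x,y]` with `F` separable in `y`.  All residues of `G/F`
at the roots of `F` have vanishing derivative if and only if `F` divides
`D(G) = (G_x F_y − G_y F_x)F_y − (F_{xy}F_y − F_{yy}F_x)G` in `K(x)[y]`. -/
theorem stmt14 {K : Type*} [Field K]
    (Ω : Type*) [Field Ω] [Algebra (RatFunc K) Ω] [IsAlgClosure (RatFunc K) Ω]
    [Algebra K Ω] [IsScalarTower K (RatFunc K) Ω]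
    (D : Derivation K Ω Ω)
    (hDX : D (algebraMap (RatFunc K) Ω RatFunc.X) = 1)
    (F G : Polynomial (Polynomial K))
    (hsep : (F.map (algebraMap (Polynomial K) (RatFunc K))).Separable) :
    (∀ φ : Ω,
        Polynomial.eval φ (F.map ((algebraMap (RatFunc K) Ω).comp
          (algebraMap (Polynomial K) (RatFunc K)))) = 0 →
        D (Polynomial.eval φ (G.map ((algebraMap (RatFunc K) Ω).comp
              (algebraMap (Polynomial K) (RatFunc K)))) /
            Polynomial.eval φ (derivative (F.map ((algebraMap (RatFunc K) Ω).comp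
              (algebraMap (Polynomial K) (RatFunc K)))))) = 0)
      ↔
    (F.map (algebraMap (Polynomial K) (RatFunc K)) ∣
      ((pderivX G * derivative F - derivative G * pderivX F) * derivative F -
          (pderivX (derivative F) * derivative F - derivative (derivative F) * pderivX F)
            * G).map (algebraMap (Polynomial K) (RatFunc K))) := by
  have : IsAlgClosed Ω := IsAlgClosure.isAlgClosed (RatFunc K)
  set r := (algebraMap (RatFunc K) Ω).comp (algebraMap (Polynomial K) (RatFunc K))
  have hr : ∀ c, r (C c) = algebraMap K Ω c := fun c => by
    simp [r, RatFunc.algebraMap_C, ← RatFunc.algebraMap_eq_C, ← IsScalarTower.algebraMap_apply]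
  have hD : ∀ p, D (r p) = r (derivative p) := fun p => by
    rw [D.map_polynomial_ringHom r hr, show r X = algebraMap (RatFunc K) Ω RatFunc.X by
      simp [r, RatFunc.algebraMap_X], hDX, mul_one]
  have hsepΩ : (F.map r).Separable := by
    rw [← Polynomial.map_map]
    exact hsep.map
  change _ ↔ _ ∣ (residueDerivNumerator F G).map _
  rw [← map_dvd_map' (algebraMap (RatFunc K) Ω), Polynomial.map_map, Polynomial.map_map,
    hsepΩ.dvd_iff_forall_isRoot, derivative_map]
  refine forall_congr' fun φ => imp_congr_right fun hφ => D.residue_deriv_eq_zero_iff r hD G hφ ?_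
  rw [← derivative_map]
  exact hsepΩ.eval₂_derivative_ne_zero (RingHom.id Ω) hφ
end
end
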